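/- For any positive numbers η and η′, the region D^η_{η′} = { x in the nonnegative orthant of ℝ⁷ : Λ/(μ+d_I+d_A+d_H) − η′ ≤ N ≤ Λ/μ + η } is globally absorbent for the COVID-19 system: for every solution x with x(0) in the open positive orthant (0,∞)⁷ there exists a time T ≥ 0 such that Λ/(μ+d_I+d_A+d_H) − η′ ≤ N(t) ≤ Λ/μ + η for all t ≥ T. -/

import Mathlib

open scoped BigOperators

/-- The vector field of the deterministic SQEAIHR COVID-19 model.
State: `x = (S, Q, E, A, I, H, R)` indexed by `Fin 7`. -/
noncomputable def covidF (Λ b q lam μ σ εA γA dA εI γI dI γH dH θ p β₁ β₂ : ℝ)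
    (x : Fin 7 → ℝ) : Fin 7 → ℝ :=
  ![Λ - (β₁ - β₂ * x 4 / (b + x 4)) * x 0 * (x 4 + θ * x 3) + lam * x 1 - (μ + q) * x 0,
    q * x 0 - (μ + lam) * x 1,
    (β₁ - β₂ * x 4 / (b + x 4)) * x 0 * (x 4 + θ * x 3) - (μ + σ) * x 2,
    (1 - p) * σ * x 2 - (μ + εA + γA + dA) * x 3,
    σ * p * x 2 - (μ + εI + γI + dI) * x 4,
    εI * x 4 + εA * x 3 - (μ + dH + γH) * x 5,
    γH * x 5 + γI * x 4 + γA * x 3 - μ * x 6]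

/-- A solution of the system on `[0, ∞)`: a function differentiable (within `[0,∞)`) whose
derivative equals the vector field at every `t ≥ 0`. -/
def IsSolution (F : (Fin 7 → ℝ) → Fin 7 → ℝ) (x : ℝ → Fin 7 → ℝ) : Prop :=
  ∀ t : ℝ, 0 ≤ t → HasDerivWithinAt x (F (x t)) (Set.Ici (0 : ℝ)) t

/-!
Before the first time a compartment empties, each compartment `x_i` loses mass at a rate at most
`K x_i`, with `K` bounding the per-capita loss rates on that compact time interval; hence
`x_i(t) ≥ x_i(0) e^{-K t} > 0`, so no compartment ever empties. On the nonnegative orthant the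
total population `N` then satisfies
`Λ - (μ + d_I + d_A + d_H) N ≤ N' = Λ - μ N - d_A A - d_I I - d_H H ≤ Λ - μ N`,
and comparison with the two linear equations squeezes `N` between `Λ / (μ + d_I + d_A + d_H)`
and `Λ / μ` up to exponentially decaying errors.
-/

open Set Real Filter Topology

section Comparison

variable {g g' : ℝ → ℝ} {a b K c : ℝ}

lemma add_mul_exp_le_of_hasDerivAt (hab : a ≤ b) (hg : ContinuousOn g (Icc a b))
    (hg' : ∀ t ∈ Ioo a b, HasDerivAt g (g' t) t) (h : ∀ t ∈ Ioo a b, K * (c - g t) ≤ g' t) :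
    c + (g a - c) * exp (-(K * (b - a))) ≤ g b := by
  have hmono : MonotoneOn (fun t => (g t - c) * exp (K * t)) (Icc a b) := by
    refine monotoneOn_of_hasDerivWithinAt_nonneg (convex_Icc a b)
      (f' := fun t => (g' t + K * (g t - c)) * exp (K * t))
      ((hg.sub continuousOn_const).mul (by fun_prop)) (fun t ht => ?_) (fun t ht => ?_)
    · rw [interior_Icc] at ht
      have hexp : HasDerivAt (fun t => exp (K * t)) (exp (K * t) * K) t := by
        simpa using ((hasDerivAt_id t).const_mul K).exp
      exact ((((hg' t ht).sub_const c).mul hexp).congr_deriv (by ring)).hasDerivWithinAt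
    · rw [interior_Icc] at ht
      exact mul_nonneg (by linarith [h t ht]) (exp_pos _).le
  have hab' := hmono (left_mem_Icc.2 hab) (right_mem_Icc.2 hab) hab
  have key : (g a - c) * exp (-(K * (b - a))) ≤ g b - c :=
    calc (g a - c) * exp (-(K * (b - a))) = (g a - c) * exp (K * a) * exp (-(K * b)) := by
          rw [mul_assoc, ← exp_add]; congr 2; ring
      _ ≤ (g b - c) * exp (K * b) * exp (-(K * b)) :=
          mul_le_mul_of_nonneg_right hab' (exp_pos _).le
      _ = g b - c := by rw [mul_assoc, ← exp_add, add_neg_cancel, exp_zero, mul_one]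
  linarith

lemma le_add_mul_exp_of_hasDerivAt (hab : a ≤ b) (hg : ContinuousOn g (Icc a b))
    (hg' : ∀ t ∈ Ioo a b, HasDerivAt g (g' t) t) (h : ∀ t ∈ Ioo a b, g' t ≤ K * (c - g t)) :
    g b ≤ c + (g a - c) * exp (-(K * (b - a))) := by
  have := add_mul_exp_le_of_hasDerivAt (g := fun t => -g t) (g' := fun t => -g' t) (K := K)
    (c := -c) hab hg.neg (fun t ht => (hg' t ht).neg) (fun t ht => by linarith [h t ht])
  linarith

lemma tendsto_mul_exp_neg_mul_atTop (hK : 0 < K) (C : ℝ) :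
    Tendsto (fun t => C * exp (-(K * t))) atTop (𝓝 0) := by
  simpa using (tendsto_exp_neg_atTop_nhds_zero.comp
    (tendsto_id.const_mul_atTop hK)).const_mul C

end Comparison

lemma exists_first_nonpos {ι : Type*} [Finite ι] {y : ℝ → ι → ℝ} (hy : ContinuousOn y (Ici 0))
    (h0 : ∀ i, 0 < y 0 i) {t₀ : ℝ} {i₀ : ι} (ht₀ : 0 ≤ t₀) (hi₀ : y t₀ i₀ ≤ 0) :
    ∃ τ, 0 < τ ∧ (∃ i, y τ i ≤ 0) ∧ ∀ t ∈ Ico 0 τ, ∀ i, 0 < y t i := by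
  have hB : IsCompact (Icc 0 t₀ ∩ ⋃ i, (fun t => y t i) ⁻¹' Iic 0) := by
    refine isCompact_Icc.of_isClosed_subset ?_ inter_subset_left
    rw [inter_iUnion]
    exact isClosed_iUnion_of_finite fun i =>
      (((continuous_apply i).comp_continuousOn hy).mono
        Icc_subset_Ici_self).preimage_isClosed_of_isClosed isClosed_Icc isClosed_Iic
  obtain ⟨τ, ⟨⟨hτ0, hτt₀⟩, hτ⟩, hleast⟩ :=
    hB.exists_isLeast ⟨t₀, ⟨ht₀, le_rfl⟩, mem_iUnion.2 ⟨i₀, hi₀⟩⟩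
  obtain ⟨i, hi⟩ := mem_iUnion.1 hτ
  refine ⟨τ, hτ0.lt_of_ne ?_, ⟨i, hi⟩, fun t ht j => ?_⟩
  · rintro rfl
    exact (h0 i).not_ge hi
  · by_contra! h
    exact ht.2.not_ge (hleast ⟨⟨ht.1, ht.2.le.trans hτt₀⟩, mem_iUnion.2 ⟨j, h⟩⟩)

namespace IsSolution

variable {F : (Fin 7 → ℝ) → Fin 7 → ℝ} {x : ℝ → Fin 7 → ℝ}

lemma continuousOn (hx : IsSolution F x) : ContinuousOn x (Ici 0) :=
  fun t ht => (hx t ht).continuousWithinAt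

lemma continuousOn_sum (hx : IsSolution F x) : ContinuousOn (fun t => ∑ i, x t i) (Ici 0) :=
  continuousOn_finsetSum _ fun i _ => (continuous_apply i).comp_continuousOn hx.continuousOn

lemma hasDerivAt (hx : IsSolution F x) {t : ℝ} (ht : 0 < t) : HasDerivAt x (F (x t)) t :=
  (hx t ht.le).hasDerivAt (Ici_mem_nhds ht)

lemma hasDerivAt_sum (hx : IsSolution F x) {t : ℝ} (ht : 0 < t) :
    HasDerivAt (fun u => ∑ i, x u i) (∑ i, F (x t) i) t :=
  HasDerivAt.fun_sum fun i _ => hasDerivAt_pi.1 (hx.hasDerivAt ht) i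

lemma pos_of_neg_mul_le {r : (Fin 7 → ℝ) → ℝ} (hx : IsSolution F x) (hr : Continuous r)
    (hF : ∀ y, (∀ j, 0 < y j) → ∀ i, -(r y * y i) ≤ F y i) (h0 : ∀ i, 0 < x 0 i) :
    ∀ t, 0 ≤ t → ∀ i, 0 < x t i := by
  by_contra! ⟨t₀, ht₀, i₀, hi₀⟩
  obtain ⟨τ, hτ, ⟨i, hi⟩, hbefore⟩ := exists_first_nonpos hx.continuousOn h0 ht₀ hi₀
  obtain ⟨K, hK⟩ := isCompact_Icc.bddAbove_image
    ((hr.comp_continuousOn hx.continuousOn).mono (Icc_subset_Ici_self : Icc 0 τ ⊆ Ici 0))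
  have hdecay : ∀ t ∈ Ioo 0 τ, K * (0 - x t i) ≤ F (x t) i := fun t ht => by
    have hrK : r (x t) ≤ K := hK ⟨t, Ioo_subset_Icc_self ht, rfl⟩
    have hxt := hbefore t ⟨ht.1.le, ht.2⟩
    nlinarith [hF (x t) hxt i, hxt i]
  have hcomp := add_mul_exp_le_of_hasDerivAt hτ.le
    (((continuous_apply i).comp_continuousOn hx.continuousOn).mono Icc_subset_Ici_self)
    (fun t ht => hasDerivAt_pi.1 (hx.hasDerivAt ht.1) i) hdecay
  simp only [Function.comp_apply, zero_add, sub_zero] at hcomp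
  linarith [mul_pos (h0 i) (exp_pos (-(K * τ)))]

end IsSolution

section Covid

variable {Λ b q lam μ σ εA γA dA εI γI dI γH dH θ p β₁ β₂ : ℝ}

lemma sum_covidF (y : Fin 7 → ℝ) :
    ∑ i, covidF Λ b q lam μ σ εA γA dA εI γI dI γH dH θ p β₁ β₂ y i
      = Λ - μ * ∑ i, y i - dA * y 3 - dI * y 4 - dH * y 5 := by
  simp only [covidF, Fin.isValue, Fin.sum_univ_seven, Matrix.cons_val_zero, Matrix.cons_val_one,
    Matrix.cons_val]
  ring

lemma neg_mul_le_covidF (hΛ : 0 ≤ Λ) (hb : 0 ≤ b) (hq : 0 ≤ q) (hlam : 0 ≤ lam)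
    (hσ : 0 ≤ σ) (hεA : 0 ≤ εA) (hγA : 0 ≤ γA) (hdA : 0 ≤ dA) (hεI : 0 ≤ εI) (hγI : 0 ≤ γI)
    (hdI : 0 ≤ dI) (hγH : 0 ≤ γH) (hdH : 0 ≤ dH) (hθ : 0 ≤ θ) (hp₀ : 0 ≤ p) (hp₁ : p ≤ 1)
    (hβ₂ : 0 ≤ β₂) (hβ : β₂ ≤ β₁) {y : Fin 7 → ℝ} (hy : ∀ j, 0 ≤ y j) (i : Fin 7) :
    -((β₁ * (y 4 + θ * y 3) + (μ + q + lam + σ + εA + γA + dA + εI + γI + dI + γH + dH)) * y i)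
      ≤ covidF Λ b q lam μ σ εA γA dA εI γI dI γH dH θ p β₁ β₂ y i := by
  have hsat₀ : 0 ≤ β₂ * y 4 / (b + y 4) := div_nonneg (mul_nonneg hβ₂ (hy 4)) (add_nonneg hb (hy 4))
  have hsat₁ : β₂ * y 4 / (b + y 4) ≤ β₂ :=
    div_le_of_le_mul₀ (add_nonneg hb (hy 4)) hβ₂ (by nlinarith [hy 4])
  have hcontact : 0 ≤ y 4 + θ * y 3 := add_nonneg (hy 4) (mul_nonneg hθ (hy 3))
  have hincidence₀ : 0 ≤ (β₁ - β₂ * y 4 / (b + y 4)) * y 0 * (y 4 + θ * y 3) :=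
    mul_nonneg (mul_nonneg (by linarith) (hy 0)) hcontact
  have hincidence₁ : (β₁ - β₂ * y 4 / (b + y 4)) * y 0 * (y 4 + θ * y 3)
      ≤ β₁ * (y 4 + θ * y 3) * y 0 := by
    nlinarith [mul_nonneg (mul_nonneg hsat₀ (hy 0)) hcontact]
  have hforce : ∀ j, 0 ≤ β₁ * (y 4 + θ * y 3) * y j := fun j =>
    mul_nonneg (mul_nonneg (hβ₂.trans hβ) hcontact) (hy j)
  set R := μ + q + lam + σ + εA + γA + dA + εI + γI + dI + γH + dH
  have hR : ∀ j, ∀ s ≤ R, s * y j ≤ R * y j := fun j s hs => mul_le_mul_of_nonneg_right hs (hy j)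
  fin_cases i <;> simp only [covidF, Fin.isValue, Fin.zero_eta, Fin.mk_one, Fin.reduceFinMk,
    Matrix.cons_val_zero, Matrix.cons_val_one, Matrix.cons_val]
  · linarith [hR 0 (μ + q) (by linarith), mul_nonneg hlam (hy 1)]
  · linarith [hR 1 (μ + lam) (by linarith), mul_nonneg hq (hy 0), hforce 1]
  · linarith [hR 2 (μ + σ) (by linarith), hforce 2]
  · linarith [hR 3 (μ + εA + γA + dA) (by linarith), hforce 3,
      mul_nonneg (mul_nonneg (sub_nonneg.2 hp₁) hσ) (hy 2)]
  · linarith [hR 4 (μ + εI + γI + dI) (by linarith), hforce 4,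
      mul_nonneg (mul_nonneg hσ hp₀) (hy 2)]
  · linarith [hR 5 (μ + dH + γH) (by linarith), hforce 5, mul_nonneg hεI (hy 4),
      mul_nonneg hεA (hy 3)]
  · linarith [hR 6 μ (by linarith), hforce 6, mul_nonneg hγH (hy 5), mul_nonneg hγI (hy 4),
      mul_nonneg hγA (hy 3)]

variable {x : ℝ → Fin 7 → ℝ}

lemma covid_total_le (hμ : 0 < μ) (hdA : 0 ≤ dA) (hdI : 0 ≤ dI) (hdH : 0 ≤ dH)
    (hx : IsSolution (covidF Λ b q lam μ σ εA γA dA εI γI dI γH dH θ p β₁ β₂) x)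
    (hnonneg : ∀ t, 0 ≤ t → ∀ i, 0 ≤ x t i) {t : ℝ} (ht : 0 ≤ t) :
    ∑ i, x t i ≤ Λ / μ + (∑ i, x 0 i - Λ / μ) * exp (-(μ * t)) := by
  have hN := le_add_mul_exp_of_hasDerivAt ht (hx.continuousOn_sum.mono Icc_subset_Ici_self)
    (fun u hu => hx.hasDerivAt_sum hu.1) (K := μ) (c := Λ / μ) fun u hu => by
      rw [sum_covidF, mul_sub, mul_div_cancel₀ _ hμ.ne']
      have hxu := hnonneg u hu.1.le
      linarith [mul_nonneg hdA (hxu 3), mul_nonneg hdI (hxu 4), mul_nonneg hdH (hxu 5)]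
  simpa using hN

lemma covid_total_ge (hμ : 0 < μ) (hdA : 0 ≤ dA) (hdI : 0 ≤ dI) (hdH : 0 ≤ dH)
    (hx : IsSolution (covidF Λ b q lam μ σ εA γA dA εI γI dI γH dH θ p β₁ β₂) x)
    (hnonneg : ∀ t, 0 ≤ t → ∀ i, 0 ≤ x t i) {t : ℝ} (ht : 0 ≤ t) :
    Λ / (μ + dI + dA + dH) + (∑ i, x 0 i - Λ / (μ + dI + dA + dH))
      * exp (-((μ + dI + dA + dH) * t)) ≤ ∑ i, x t i := by
  have hm : μ + dI + dA + dH ≠ 0 := by positivity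
  have hN := add_mul_exp_le_of_hasDerivAt ht (hx.continuousOn_sum.mono Icc_subset_Ici_self)
    (fun u hu => hx.hasDerivAt_sum hu.1) (K := μ + dI + dA + dH) (c := Λ / (μ + dI + dA + dH))
    fun u hu => by
      rw [sum_covidF, mul_sub, mul_div_cancel₀ _ hm]
      have hle : ∀ j, x u j ≤ ∑ i, x u i := fun j =>
        Finset.single_le_sum (fun i _ => hnonneg u hu.1.le i) (Finset.mem_univ j)
      linarith [mul_le_mul_of_nonneg_left (hle 3) hdA, mul_le_mul_of_nonneg_left (hle 4) hdI,
        mul_le_mul_of_nonneg_left (hle 5) hdH]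
  simpa using hN

end Covid

/-- for positive `η, η′` the region `D^η_η′` is globally absorbent:
every solution starting in the open positive orthant eventually enters and stays in it. -/
theorem covid_region_globally_absorbent
    (Λ b q lam μ σ εA γA dA εI γI dI γH dH θ p β₁ β₂ : ℝ)
    (hΛ : 0 < Λ) (hb : 0 < b) (hq : 0 < q) (hlam : 0 < lam) (hμ : 0 < μ)
    (hσ : 0 < σ) (hεA : 0 < εA) (hγA : 0 < γA) (hdA : 0 < dA)
    (hεI : 0 < εI) (hγI : 0 < γI) (hdI : 0 < dI) (hγH : 0 < γH) (hdH : 0 < dH)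
    (hθ : θ ∈ Set.Ioo (0 : ℝ) 1) (hp : p ∈ Set.Ioo (0 : ℝ) 1)
    (hβ₂ : 0 < β₂) (hβ : β₂ ≤ β₁)
    (η η' : ℝ) (hη : 0 < η) (hη' : 0 < η')
    (x : ℝ → Fin 7 → ℝ)
    (hx : IsSolution (covidF Λ b q lam μ σ εA γA dA εI γI dI γH dH θ p β₁ β₂) x)
    (h0 : ∀ i, 0 < x 0 i) :
    ∃ T : ℝ, 0 ≤ T ∧ ∀ t : ℝ, T ≤ t →
      Λ / (μ + dI + dA + dH) - η' ≤ (∑ i, x t i) ∧ (∑ i, x t i) ≤ Λ / μ + η := by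
  have hnonneg : ∀ t, 0 ≤ t → ∀ i, 0 ≤ x t i := fun t ht i =>
    (hx.pos_of_neg_mul_le (by fun_prop) (fun y hy => neg_mul_le_covidF hΛ.le hb.le hq.le hlam.le
      hσ.le hεA.le hγA.le hdA.le hεI.le hγI.le hdI.le hγH.le hdH.le hθ.1.le hp.1.le hp.2.le hβ₂.le
      hβ fun j => (hy j).le) h0 t ht i).le
  have hupper : ∀ᶠ t in atTop, (∑ i, x 0 i - Λ / μ) * exp (-(μ * t)) < η :=
    (tendsto_mul_exp_neg_mul_atTop hμ _).eventually (gt_mem_nhds hη)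
  have hlower : ∀ᶠ t in atTop, -η' <
      (∑ i, x 0 i - Λ / (μ + dI + dA + dH)) * exp (-((μ + dI + dA + dH) * t)) :=
    (tendsto_mul_exp_neg_mul_atTop (by positivity) _).eventually
      (lt_mem_nhds (neg_neg_of_pos hη'))
  obtain ⟨T, hT⟩ := eventually_atTop.1 (hupper.and hlower)
  refine ⟨max T 0, le_max_right _ _, fun t ht => ?_⟩
  have ht₀ : 0 ≤ t := (le_max_right _ _).trans ht
  obtain ⟨hupper_t, hlower_t⟩ := hT t ((le_max_left _ _).trans ht)
  constructor
  · linarith [covid_total_ge hμ hdA.le hdI.le hdH.le hx hnonneg ht₀]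
  · linarith [covid_total_le hμ hdA.le hdI.le hdH.le hx hnonneg ht₀]
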